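/- Let D ⊂ ℝ^d be a nonempty bounded open set. If u ∈ L^∞(D; ℝ^{d_u}) then A(u) ∈ L^∞(D; ℝ^{d_V}) with ‖A(u)‖_{L^∞} ≤ ‖V‖ ‖u‖_{L^∞}, where ‖V‖ denotes the operator norm of V. Furthermore, if u ∈ C(D̄; ℝ^{d_u}) then A(u) is (extends to) an element of C(D̄; ℝ^{d_V}). -/

import Mathlib

/-!
`A(u)(x)` is the mean of `V ∘ u` against the positive weight
`y ↦ exp ⟪Q u(x), K u(y)⟫`, hence bounded by the essential supremum of `‖V u‖`. If `u` is
continuous on the compact set `closure D`, these weights are uniformly bounded, so numerator and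
denominator depend continuously on `x` by dominated convergence, and the denominator is positive
because `D` has positive measure.
-/

open MeasureTheory Filter

noncomputable section

def emulVec {m n : ℕ} (M : Matrix (Fin m) (Fin n) ℝ) (v : EuclideanSpace ℝ (Fin n)) :
    EuclideanSpace ℝ (Fin m) :=
  WithLp.toLp 2 (fun i => M.mulVec (fun j => v j) i)

def selfAttn {d du dK dV : ℕ} (D : Set (EuclideanSpace ℝ (Fin d)))
    (Q K : Matrix (Fin dK) (Fin du) ℝ) (V : Matrix (Fin dV) (Fin du) ℝ)
    (u : EuclideanSpace ℝ (Fin d) → EuclideanSpace ℝ (Fin du))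
    (x : EuclideanSpace ℝ (Fin d)) : EuclideanSpace ℝ (Fin dV) :=
  (∫ s in D, Real.exp ((inner ℝ (emulVec Q (u x)) (emulVec K (u s)) : ℝ)))⁻¹ •
    ∫ y in D, Real.exp ((inner ℝ (emulVec Q (u x)) (emulVec K (u y)) : ℝ)) • emulVec V (u y)

/-- The operator norm of a matrix, viewed as a linear map between Euclidean spaces. -/
def matOpNorm {m n : ℕ} (V : Matrix (Fin m) (Fin n) ℝ) : ℝ :=
  ‖LinearMap.toContinuousLinearMap (Matrix.toEuclideanLin V)‖

section WeightedMean

variable {α E : Type*} [MeasurableSpace α] [NormedAddCommGroup E] [NormedSpace ℝ E]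

/-- Equal to `0` when `∫ w ∂μ = 0`, in particular when `w` is not integrable. -/
def weightedMean (μ : Measure α) (w : α → ℝ) (f : α → E) : E :=
  (∫ y, w y ∂μ)⁻¹ • ∫ y, w y • f y ∂μ

variable {μ : Measure α}

theorem norm_weightedMean_le {w : α → ℝ} {f : α → E} {C : ℝ} (hw : 0 ≤ᵐ[μ] w)
    (hf : ∀ᵐ y ∂μ, ‖f y‖ ≤ C) (hC : 0 ≤ C) : ‖weightedMean μ w f‖ ≤ C := by
  by_cases hwi : Integrable w μ
  swap
  · simpa [weightedMean, integral_undef hwi] using hC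
  have hI : 0 ≤ ∫ y, w y ∂μ := integral_nonneg_of_ae hw
  have hnum : ‖∫ y, w y • f y ∂μ‖ ≤ C * ∫ y, w y ∂μ := by
    rw [← integral_const_mul]
    refine norm_integral_le_of_norm_le (hwi.const_mul C) ?_
    filter_upwards [hw, hf] with y hwy hfy
    rw [norm_smul, Real.norm_of_nonneg hwy, mul_comm]
    exact mul_le_mul_of_nonneg_right hfy hwy
  rw [weightedMean, norm_smul, norm_inv, Real.norm_of_nonneg hI]
  rcases hI.eq_or_lt with hI0 | hIpos
  · simpa [← hI0] using hC
  · rw [inv_mul_le_iff₀ hIpos, mul_comm]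
    exact hnum

theorem MeasureTheory.AEStronglyMeasurable.weightedMean {X : Type*} [MeasurableSpace X]
    {ν : Measure X} [SFinite μ] {w : X → α → ℝ} {f : α → E}
    (hw : AEStronglyMeasurable (Function.uncurry w) (ν.prod μ))
    (hf : AEStronglyMeasurable f μ) :
    AEStronglyMeasurable (fun x => weightedMean μ (w x) f) ν :=
  (hw.integral_prod_right').aemeasurable.inv.aestronglyMeasurable.smul
    (hw.smul hf.comp_snd).integral_prod_right'

theorem ContinuousOn.weightedMean {X : Type*} [TopologicalSpace X] [FirstCountableTopology X]
    [IsFiniteMeasure μ] {w : X → α → ℝ} {f : α → E} {s : Set X} {C B : ℝ}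
    (hw_meas : ∀ x ∈ s, AEStronglyMeasurable (w x) μ)
    (hw_bound : ∀ x ∈ s, ∀ᵐ y ∂μ, ‖w x y‖ ≤ C)
    (hw_cont : ∀ᵐ y ∂μ, ContinuousOn (fun x => w x y) s)
    (hf_meas : AEStronglyMeasurable f μ) (hf_bound : ∀ᵐ y ∂μ, ‖f y‖ ≤ B)
    (hw_ne : ∀ x ∈ s, ∫ y, w x y ∂μ ≠ 0) :
    ContinuousOn (fun x => weightedMean μ (w x) f) s := by
  have hden : ContinuousOn (fun x => ∫ y, w x y ∂μ) s :=
    continuousOn_of_dominated hw_meas hw_bound (integrable_const C) hw_cont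
  have hnum : ContinuousOn (fun x => ∫ y, w x y • f y ∂μ) s := by
    refine continuousOn_of_dominated (fun x hx => (hw_meas x hx).smul hf_meas) ?_
      (integrable_const (C * B)) (hw_cont.mono fun y hy => hy.smul continuousOn_const)
    intro x hx
    filter_upwards [hw_bound x hx, hf_bound] with y hwy hfy
    rw [norm_smul]
    exact mul_le_mul hwy hfy (norm_nonneg _) ((norm_nonneg _).trans hwy)
  exact (hden.inv₀ hw_ne).smul hnum

end WeightedMean

theorem emulVec_eq {m n : ℕ} (M : Matrix (Fin m) (Fin n) ℝ) :
    emulVec M = LinearMap.toContinuousLinearMap (Matrix.toEuclideanLin M) := rfl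

theorem continuous_emulVec {m n : ℕ} (M : Matrix (Fin m) (Fin n) ℝ) : Continuous (emulVec M) := by
  rw [emulVec_eq]
  exact ContinuousLinearMap.continuous _

theorem matOpNorm_nonneg {m n : ℕ} (M : Matrix (Fin m) (Fin n) ℝ) : 0 ≤ matOpNorm M :=
  norm_nonneg _

theorem norm_emulVec_le {m n : ℕ} (M : Matrix (Fin m) (Fin n) ℝ) (v : EuclideanSpace ℝ (Fin n)) :
    ‖emulVec M v‖ ≤ matOpNorm M * ‖v‖ := by
  rw [emulVec_eq]
  exact ContinuousLinearMap.le_opNorm _ v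

theorem norm_emulVec_le_of_le {m n : ℕ} (M : Matrix (Fin m) (Fin n) ℝ)
    {v : EuclideanSpace ℝ (Fin n)} {a : ℝ} (hv : ‖v‖ ≤ a) : ‖emulVec M v‖ ≤ matOpNorm M * a :=
  (norm_emulVec_le M v).trans (mul_le_mul_of_nonneg_left hv (matOpNorm_nonneg M))

section SelfAttention

variable {d du dK dV : ℕ} {D : Set (EuclideanSpace ℝ (Fin d))}
  {Q K : Matrix (Fin dK) (Fin du) ℝ} {V : Matrix (Fin dV) (Fin du) ℝ}
  {u : EuclideanSpace ℝ (Fin d) → EuclideanSpace ℝ (Fin du)}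

def attnKernel (Q K : Matrix (Fin dK) (Fin du) ℝ) (v w : EuclideanSpace ℝ (Fin du)) : ℝ :=
  Real.exp (inner ℝ (emulVec Q v) (emulVec K w))

theorem selfAttn_eq_weightedMean : selfAttn D Q K V u = fun x => weightedMean (volume.restrict D)
    (fun y => attnKernel Q K (u x) (u y)) (fun y => emulVec V (u y)) := rfl

theorem attnKernel_pos (v w : EuclideanSpace ℝ (Fin du)) : 0 < attnKernel Q K v w :=
  Real.exp_pos _

theorem continuous_attnKernel :
    Continuous fun p : EuclideanSpace ℝ (Fin du) × EuclideanSpace ℝ (Fin du) =>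
      attnKernel Q K p.1 p.2 :=
  Real.continuous_exp.comp (((continuous_emulVec Q).comp continuous_fst).inner
    ((continuous_emulVec K).comp continuous_snd))

theorem attnKernel_le {v w : EuclideanSpace ℝ (Fin du)} {M : ℝ} (hv : ‖v‖ ≤ M) (hw : ‖w‖ ≤ M) :
    attnKernel Q K v w ≤ Real.exp (matOpNorm Q * M * (matOpNorm K * M)) := by
  refine Real.exp_le_exp.mpr ((real_inner_le_norm _ _).trans ?_)
  exact mul_le_mul (norm_emulVec_le_of_le Q hv) (norm_emulVec_le_of_le K hw) (norm_nonneg _)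
    (mul_nonneg (matOpNorm_nonneg Q) ((norm_nonneg v).trans hv))

theorem norm_selfAttn_le {M : ℝ} (hM : 0 ≤ M) (hu : ∀ᵐ y ∂volume.restrict D, ‖u y‖ ≤ M)
    (x : EuclideanSpace ℝ (Fin d)) : ‖selfAttn D Q K V u x‖ ≤ matOpNorm V * M :=
  norm_weightedMean_le (ae_of_all _ fun _ => (attnKernel_pos _ _).le)
    (hu.mono fun _ hy => norm_emulVec_le_of_le V hy)
    (mul_nonneg (matOpNorm_nonneg V) hM)

theorem aestronglyMeasurable_selfAttn (hu : AEStronglyMeasurable u (volume.restrict D)) :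
    AEStronglyMeasurable (selfAttn D Q K V u) (volume.restrict D) := by
  have hw : AEStronglyMeasurable (fun p : EuclideanSpace ℝ (Fin d) × EuclideanSpace ℝ (Fin d) =>
      attnKernel Q K (u p.1) (u p.2)) ((volume.restrict D).prod (volume.restrict D)) := by
    simpa only using continuous_attnKernel.comp_aestronglyMeasurable
      (hu.comp_fst.prodMk hu.comp_snd)
  rw [selfAttn_eq_weightedMean]
  exact hw.weightedMean ((continuous_emulVec V).comp_aestronglyMeasurable hu)

theorem continuousOn_selfAttn (hDo : IsOpen D) (hDb : Bornology.IsBounded D) (hDne : D.Nonempty)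
    (hu : ContinuousOn u (closure D)) : ContinuousOn (selfAttn D Q K V u) (closure D) := by
  set μ := volume.restrict D
  have : IsFiniteMeasure μ := isFiniteMeasure_restrict.mpr hDb.measure_lt_top.ne
  have : NeZero (volume D) := ⟨hDo.measure_ne_zero volume hDne⟩
  obtain ⟨M, hM⟩ := hDb.isCompact_closure.exists_bound_of_continuousOn hu
  have hu_meas : AEStronglyMeasurable u μ :=
    (hu.mono subset_closure).aestronglyMeasurable hDo.measurableSet
  have hu_bound : ∀ᵐ y ∂μ, ‖u y‖ ≤ M :=
    (ae_restrict_mem hDo.measurableSet).mono fun y hy => hM y (subset_closure hy)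
  have hw_meas (x) : AEStronglyMeasurable (fun y => attnKernel Q K (u x) (u y)) μ := by
    simpa only [Function.comp_def] using
      (continuous_attnKernel.comp (Continuous.prodMk_right (u x))).comp_aestronglyMeasurable hu_meas
  have hw_bound : ∀ x ∈ closure D, ∀ᵐ y ∂μ,
      ‖attnKernel Q K (u x) (u y)‖ ≤ Real.exp (matOpNorm Q * M * (matOpNorm K * M)) :=
    fun x hx => hu_bound.mono fun y hy => by
      rw [Real.norm_of_nonneg (attnKernel_pos _ _).le]
      exact attnKernel_le (hM x hx) hy
  rw [selfAttn_eq_weightedMean]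
  refine ContinuousOn.weightedMean (fun x _ => hw_meas x) hw_bound (ae_of_all _ fun y => ?_)
    ((continuous_emulVec V).comp_aestronglyMeasurable hu_meas)
    (hu_bound.mono fun _ hy => norm_emulVec_le_of_le V hy) fun x hx => ?_
  · exact (continuous_attnKernel.comp (Continuous.prodMk_left (u y))).comp_continuousOn hu
  · exact (integral_exp_pos (Integrable.of_bound (hw_meas x) _ (hw_bound x hx))).ne'

end SelfAttention

theorem self_attention_bounded_and_continuous {d du dK dV : ℕ}
    (D : Set (EuclideanSpace ℝ (Fin d)))
    (hDo : IsOpen D) (hDb : Bornology.IsBounded D) (hDne : D.Nonempty)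
    (Q K : Matrix (Fin dK) (Fin du) ℝ) (V : Matrix (Fin dV) (Fin du) ℝ)
    (u : EuclideanSpace ℝ (Fin d) → EuclideanSpace ℝ (Fin du)) :
    (MemLp u ⊤ (volume.restrict D) →
      MemLp (selfAttn D Q K V u) ⊤ (volume.restrict D) ∧
      eLpNorm (selfAttn D Q K V u) ⊤ (volume.restrict D) ≤
        ENNReal.ofReal (matOpNorm V) * eLpNorm u ⊤ (volume.restrict D)) ∧
    (ContinuousOn u (closure D) → ContinuousOn (selfAttn D Q K V u) (closure D)) := by
  refine ⟨fun hu => ?_, continuousOn_selfAttn hDo hDb hDne⟩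
  have hbound : ∀ x, ‖selfAttn D Q K V u x‖ ≤ matOpNorm V * lpNorm u ⊤ (volume.restrict D) :=
    norm_selfAttn_le lpNorm_nonneg (ae_le_lpNorm_exponent_top hu)
  refine ⟨memLp_top_of_bound (aestronglyMeasurable_selfAttn hu.1) _ (ae_of_all _ hbound), ?_⟩
  rw [eLpNorm_exponent_top, ← ofReal_lpNorm hu, ← ENNReal.ofReal_mul (matOpNorm_nonneg V)]
  exact eLpNormEssSup_le_of_ae_bound (ae_of_all _ hbound)
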